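/- Let y_1, …, y_n be nonzero vectors in ℝ^q, let c′ > 0, and let μ > 1 + c′·n. If S is a symmetric q×q real matrix with I ⪯ S ⪯ μI (Loewner order), then I ⪯ G(S) ⪯ (1 + c′n)·I; in particular G maps the set D = {S symmetric : I ⪯ S ⪯ μI} into itself. -/

import Mathlib

open Matrix Classical

/-- Principal (symmetric positive semidefinite) square root of a matrix;
junk value `0` if the matrix is not positive semidefinite. -/
noncomputable def matSqrt {q : ℕ} (A : Matrix (Fin q) (Fin q) ℝ) : Matrix (Fin q) (Fin q) ℝ :=
  if h : A.PosSemidef then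
    (h.1.eigenvectorUnitary : Matrix (Fin q) (Fin q) ℝ) *
      diagonal ((↑) ∘ (√·) ∘ h.1.eigenvalues) *
      (star h.1.eigenvectorUnitary : Matrix (Fin q) (Fin q) ℝ)
  else 0

/-- Loewner order: `loewnerLE A B` iff `B - A` is positive semidefinite. -/
def loewnerLE {q : ℕ} (A B : Matrix (Fin q) (Fin q) ℝ) : Prop := (B - A).PosSemidef

/-- Largest eigenvalue of a (Hermitian) matrix; junk value `0` otherwise. -/
noncomputable def maxEig {q : ℕ} (A : Matrix (Fin q) (Fin q) ℝ) : ℝ :=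
  if h : A.IsHermitian then ⨆ i, h.eigenvalues i else 0

/-- Smallest eigenvalue of a (Hermitian) matrix; junk value `0` otherwise. -/
noncomputable def minEig {q : ℕ} (A : Matrix (Fin q) (Fin q) ℝ) : ℝ :=
  if h : A.IsHermitian then ⨅ i, h.eigenvalues i else 0

/-- The matrix `Y` whose columns are the `y i`. -/
def Ymat {q n : ℕ} (y : Fin n → (Fin q → ℝ)) : Matrix (Fin q) (Fin n) ℝ :=
  Matrix.of fun i j => y j i

/-- The map `G(S) = I + c' · S^(1/2) Y D_S Yᵀ S^(1/2)`, where `D_S` is diagonal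
with entries `1 / (yᵢᵀ S yᵢ)`. -/
noncomputable def Gmap {q n : ℕ} (y : Fin n → (Fin q → ℝ)) (c' : ℝ)
    (S : Matrix (Fin q) (Fin q) ℝ) : Matrix (Fin q) (Fin q) ℝ :=
  1 + c' • (matSqrt S * Ymat y * Matrix.diagonal (fun i => (y i ⬝ᵥ S *ᵥ y i)⁻¹)
      * (Ymat y)ᵀ * matSqrt S)

/-!
`G(S) - I = c' · Σᵢ Pᵢ`, where `Pᵢ` is the orthogonal projection onto the line spanned by
`S^(1/2) yᵢ`: indeed `yᵢᵀ S yᵢ = ‖S^(1/2) yᵢ‖²`. Each `Pᵢ` satisfies `0 ⪯ Pᵢ ⪯ I` (the upper bound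
is Cauchy–Schwarz), so `I ⪯ G(S) ⪯ (1 + c'n) I ⪯ μ I`.
-/

open scoped MatrixOrder

lemma loewnerLE_iff_le {q : ℕ} {A B : Matrix (Fin q) (Fin q) ℝ} : loewnerLE A B ↔ A ≤ B :=
  Iff.rfl

section matSqrt

variable {q : ℕ} {A : Matrix (Fin q) (Fin q) ℝ}

lemma matSqrt_eq_cfcSqrt (hA : A.PosSemidef) : matSqrt A = CFC.sqrt A := by
  rw [CFC.sqrt_eq_real_sqrt A hA.nonneg, cfcₙ_eq_cfc, hA.1.cfc_eq, IsHermitian.cfc, matSqrt,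
    dif_pos hA, Unitary.conjStarAlgAut_apply]
  rfl

lemma matSqrt_mul_self (hA : A.PosSemidef) : matSqrt A * matSqrt A = A := by
  rw [matSqrt_eq_cfcSqrt hA]
  exact CFC.sqrt_mul_sqrt_self A hA.nonneg

lemma transpose_matSqrt (hA : A.PosSemidef) : (matSqrt A)ᵀ = matSqrt A := by
  rw [matSqrt_eq_cfcSqrt hA]
  exact (CFC.sqrt_nonneg A).posSemidef.isHermitian.eq

end matSqrt

section lineProj

variable {m : Type*} [Fintype m]

/-- Orthogonal projection onto the line `ℝ v`; it is `0` for `v = 0`, since `0⁻¹ = 0`. -/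
noncomputable def lineProj (v : m → ℝ) : Matrix m m ℝ := (v ⬝ᵥ v)⁻¹ • vecMulVec v v

lemma lineProj_nonneg (v : m → ℝ) : 0 ≤ lineProj v := by
  have hv : 0 ≤ v ⬝ᵥ v := by simpa using dotProduct_star_self_nonneg v
  rw [lineProj]
  simpa using ((posSemidef_vecMulVec_self_star v).smul (inv_nonneg.2 hv)).nonneg

lemma dotProduct_lineProj_mulVec (v x : m → ℝ) :
    x ⬝ᵥ lineProj v *ᵥ x = (v ⬝ᵥ v)⁻¹ * (v ⬝ᵥ x) ^ 2 := by
  simp only [lineProj, smul_mulVec, vecMulVec_mulVec, dotProduct_smul, op_smul_eq_smul,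
    smul_eq_mul, dotProduct_comm x v]
  ring

lemma lineProj_le_one [DecidableEq m] (v : m → ℝ) : lineProj v ≤ 1 := by
  refine PosSemidef.of_dotProduct_mulVec_nonneg
    (isHermitian_one.sub (lineProj_nonneg v).posSemidef.isHermitian) fun x => ?_
  have hcs : (v ⬝ᵥ x) ^ 2 ≤ (v ⬝ᵥ v) * (x ⬝ᵥ x) := by
    simpa [dotProduct, sq] using Finset.sum_mul_sq_le_sq_mul_sq Finset.univ v x
  have hv : 0 ≤ v ⬝ᵥ v := by simpa using dotProduct_star_self_nonneg v
  have hx : 0 ≤ x ⬝ᵥ x := by simpa using dotProduct_star_self_nonneg x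
  rw [star_trivial, sub_mulVec, dotProduct_sub, one_mulVec, dotProduct_lineProj_mulVec,
    sub_nonneg]
  calc (v ⬝ᵥ v)⁻¹ * (v ⬝ᵥ x) ^ 2 ≤ (v ⬝ᵥ v)⁻¹ * (v ⬝ᵥ v) * (x ⬝ᵥ x) := by
        rw [mul_assoc]; exact mul_le_mul_of_nonneg_left hcs (inv_nonneg.2 hv)
    _ ≤ x ⬝ᵥ x := mul_le_of_le_one_left hx (inv_mul_le_one_of_le₀ le_rfl hv)

end lineProj

lemma Ymat_mul_diagonal_mul_transpose {q n : ℕ} (y : Fin n → Fin q → ℝ) (d : Fin n → ℝ) :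
    Ymat y * diagonal d * (Ymat y)ᵀ = ∑ i, d i • vecMulVec (y i) (y i) := by
  ext j k
  simp only [Ymat, mul_apply, of_apply, diagonal_apply, mul_ite, mul_zero, Finset.sum_ite_eq',
    Finset.mem_univ, ↓reduceIte, transpose_apply, vecMulVec, smul_of, Matrix.sum_apply,
    Pi.smul_apply, smul_eq_mul]
  exact Finset.sum_congr rfl fun i _ => by ring

lemma Gmap_eq_one_add_smul_sum_lineProj {q n : ℕ} (y : Fin n → Fin q → ℝ) (c' : ℝ)
    {S : Matrix (Fin q) (Fin q) ℝ} (hS : S.PosSemidef) :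
    Gmap y c' S = 1 + c' • ∑ i, lineProj (matSqrt S *ᵥ y i) := by
  set R := matSqrt S
  have hRy : ∀ i, y i ᵥ* R = R *ᵥ y i := fun i => by
    rw [← mulVec_transpose, transpose_matSqrt hS]
  have hnorm : ∀ i, y i ⬝ᵥ S *ᵥ y i = (R *ᵥ y i) ⬝ᵥ (R *ᵥ y i) := fun i => by
    rw [← matSqrt_mul_self hS, ← mulVec_mulVec, dotProduct_mulVec, hRy]
  have hassoc : R * Ymat y * diagonal (fun i => (y i ⬝ᵥ S *ᵥ y i)⁻¹) * (Ymat y)ᵀ * R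
      = R * (Ymat y * diagonal (fun i => (y i ⬝ᵥ S *ᵥ y i)⁻¹) * (Ymat y)ᵀ) * R := by
    simp only [Matrix.mul_assoc]
  rw [Gmap, hassoc, Ymat_mul_diagonal_mul_transpose, Finset.mul_sum, Finset.sum_mul]
  simp only [mul_smul_comm, smul_mul_assoc, mul_vecMulVec, vecMulVec_mul, hRy, hnorm, lineProj]

theorem Gmap_maps_D_to_D_general {q n : ℕ}
    (y : Fin n → (Fin q → ℝ))
    {c' : ℝ} (hc' : 0 < c') {μ : ℝ} (hμ : 1 + c' * n < μ)
    (S : Matrix (Fin q) (Fin q) ℝ)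
    (hS1 : loewnerLE 1 S) :
    loewnerLE 1 (Gmap y c' S) ∧ loewnerLE (Gmap y c' S) ((1 + c' * n) • 1) ∧
      (Gmap y c' S).IsHermitian ∧ loewnerLE (Gmap y c' S) (μ • 1) := by
  simp only [loewnerLE_iff_le] at hS1 ⊢
  have hS : S.PosSemidef := by simpa using (le_iff.mp hS1).add PosSemidef.one
  set P := ∑ i, lineProj (matSqrt S *ᵥ y i)
  have hP : 0 ≤ P := Finset.sum_nonneg fun i _ => lineProj_nonneg _
  have hPn : P ≤ (n : ℝ) • 1 := by
    calc P ≤ ∑ _i : Fin n, 1 := Finset.sum_le_sum fun i _ => lineProj_le_one _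
      _ = (n : ℝ) • 1 := by
        rw [Finset.sum_const, Finset.card_univ, Fintype.card_fin, Nat.cast_smul_eq_nsmul]
  have hG : Gmap y c' S = 1 + c' • P := Gmap_eq_one_add_smul_sum_lineProj y c' hS
  have hlow : 1 ≤ Gmap y c' S := hG ▸ le_add_of_nonneg_right (smul_nonneg hc'.le hP)
  have hup : Gmap y c' S ≤ (1 + c' * n) • 1 := by
    rw [hG, add_smul, one_smul, mul_smul]
    exact add_le_add le_rfl (smul_le_smul_of_nonneg_left hPn hc'.le)
  refine ⟨hlow, hup, ?_, hup.trans (smul_le_smul_of_nonneg_right hμ.le zero_le_one)⟩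
  simpa only [sub_add_cancel] using (le_iff.mp hlow).isHermitian.add isHermitian_one

/-- If the `yᵢ` are nonzero, `c' > 0` and `μ > 1 + c'·n`, then for every symmetric `S`
with `I ⪯ S ⪯ μI` we have `I ⪯ G(S) ⪯ (1 + c'n)·I`; in particular `G(S)` lies again in
`D = {S symmetric : I ⪯ S ⪯ μI}`. -/
theorem Gmap_maps_D_to_D {q n : ℕ}
    (y : Fin n → (Fin q → ℝ)) (hy : ∀ i, y i ≠ 0)
    {c' : ℝ} (hc' : 0 < c') {μ : ℝ} (hμ : 1 + c' * n < μ)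
    (S : Matrix (Fin q) (Fin q) ℝ) (hS : S.IsHermitian)
    (hS1 : loewnerLE 1 S) (hS2 : loewnerLE S (μ • 1)) :
    loewnerLE 1 (Gmap y c' S) ∧ loewnerLE (Gmap y c' S) ((1 + c' * n) • 1) ∧
      (Gmap y c' S).IsHermitian ∧ loewnerLE (Gmap y c' S) (μ • 1) :=
  Gmap_maps_D_to_D_general y hc' hμ S hS1
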